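/- Let Γ be the union of an increasing chain of subgroups Γ_1 ≤ Γ_2 ≤ Γ_3 ≤ ⋯. Then genrk(Γ) ≤ liminf_{i→∞} genrk(Γ_i). -/

import Mathlib

open scoped commutatorElement

/-- The mixed commutator length `cl_{G,N}` (∞ if not a product of mixed commutators). -/
noncomputable def clGN {G : Type*} [Group G] (N : Subgroup G) (x : G) : ℕ∞ :=
  sInf {n : ℕ∞ | ∃ k : ℕ, n = k ∧ ∃ g v : Fin k → G, (∀ i, v i ∈ N) ∧
    x = (List.ofFn fun i => ⁅g i, v i⁆).prod}

/-- The rank of a subgroup: minimal size of a generating set. -/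
noncomputable def rk {G : Type*} [Group G] (H : Subgroup G) : ℕ∞ :=
  sInf {n : ℕ∞ | ∃ S : Finset G, Subgroup.closure (S : Set G) = H ∧ n = S.card}

/-- The intermediate rank `intrk^Γ(Λ) = inf {rk Θ | Λ ≤ Θ ≤ Γ}`. -/
noncomputable def intrk {G : Type*} [Group G] (Λ : Subgroup G) : ℕ∞ :=
  sInf {n : ℕ∞ | ∃ Θ : Subgroup G, Λ ≤ Θ ∧ n = rk Θ}

/-- The general rank in the sense of Malcev. -/
noncomputable def genrk (G : Type*) [Group G] : ℕ∞ :=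
  sSup {n : ℕ∞ | ∃ Λ : Subgroup G, Λ.FG ∧ n = intrk Λ}

/-- The special rank in the sense of Malcev. -/
noncomputable def sperk (G : Type*) [Group G] : ℕ∞ :=
  sSup {n : ℕ∞ | ∃ Λ : Subgroup G, Λ.FG ∧ n = rk Λ}

/-! A finitely generated `Λ ≤ Γ` lies in `Γᵢ` for all large `i`, and its intermediate rank in
`Γᵢ` bounds the one in `Γ`: an intermediate subgroup `Λ ≤ Θ ≤ Γᵢ`, pushed into `Γ`, is
intermediate there and its rank does not grow. -/

lemma rk_map_le {G H : Type*} [Group G] [Group H] (f : G →* H) (Θ : Subgroup G) :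
    rk (Θ.map f) ≤ rk Θ := by
  classical
  refine le_sInf ?_
  rintro _ ⟨T, rfl, rfl⟩
  calc rk ((Subgroup.closure (T : Set G)).map f) ≤ ((T.image f).card : ℕ∞) :=
        sInf_le ⟨T.image f, by rw [Finset.coe_image, MonoidHom.map_closure], rfl⟩
    _ ≤ T.card := by exact_mod_cast Finset.card_image_le

lemma intrk_map_le {G H : Type*} [Group G] [Group H] (f : G →* H) (Λ : Subgroup G) :
    intrk (Λ.map f) ≤ intrk Λ := by
  refine le_sInf ?_
  rintro _ ⟨Θ, hΛΘ, rfl⟩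
  calc intrk (Λ.map f) ≤ rk (Θ.map f) := sInf_le ⟨Θ.map f, Subgroup.map_mono hΛΘ, rfl⟩
    _ ≤ rk Θ := rk_map_le f Θ

lemma intrk_le_genrk {G : Type*} [Group G] {Λ : Subgroup G} (hΛ : Λ.FG) :
    intrk Λ ≤ genrk G := by
  unfold genrk
  exact le_sSup ⟨Λ, hΛ, rfl⟩

lemma Subgroup.FG.subgroupOf {G : Type*} [Group G] {Λ : Subgroup G} (hΛ : Λ.FG)
    {H : Subgroup G} (hle : Λ ≤ H) : (Λ.subgroupOf H).FG := by
  have : Group.FG Λ := (Group.fg_iff_subgroup_fg Λ).2 hΛ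
  exact (Group.fg_iff_subgroup_fg _).1
    (Group.fg_of_surjective (f := (Subgroup.subgroupOfEquivOfLe hle).symm.toMonoidHom)
      (Subgroup.subgroupOfEquivOfLe hle).symm.surjective)

lemma intrk_le_genrk_of_le {G : Type*} [Group G] {Λ H : Subgroup G} (hΛ : Λ.FG)
    (hle : Λ ≤ H) : intrk Λ ≤ genrk H :=
  calc intrk Λ = intrk ((Λ.subgroupOf H).map H.subtype) := by
        rw [Subgroup.map_subgroupOf_eq_of_le hle]
    _ ≤ intrk (Λ.subgroupOf H) := intrk_map_le _ _
    _ ≤ genrk H := intrk_le_genrk (hΛ.subgroupOf hle)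

lemma Subgroup.FG.exists_le_of_directed {G ι : Type*} [Group G] [Nonempty ι]
    {K : ι → Subgroup G} (hK : Directed (· ≤ ·) K) {Λ : Subgroup G} (hΛ : Λ.FG)
    (hcover : (Λ : Set G) ⊆ ⋃ i, (K i : Set G)) : ∃ i, Λ ≤ K i := by
  obtain ⟨S, rfl⟩ := hΛ
  have hK' : Directed (· ⊆ ·) fun i => (K i : Set G) := hK.mono_comp _ fun _ _ h => h
  obtain ⟨i, hi⟩ :=
    hK'.exists_mem_subset_of_finset_subset_biUnion (Subgroup.subset_closure.trans hcover)
  exact ⟨i, (Subgroup.closure_le _).2 hi⟩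

/-- general rank of an increasing union of subgroups is at most the
liminf of the general ranks. -/
theorem genrk_iUnion_le_liminf {Γ : Type*} [Group Γ] (Γs : ℕ → Subgroup Γ)
    (hmono : Monotone Γs) (hunion : (⋃ i, ((Γs i : Subgroup Γ) : Set Γ)) = Set.univ) :
    genrk Γ ≤ Filter.liminf (fun i => genrk ↥(Γs i)) Filter.atTop := by
  refine sSup_le ?_
  rintro _ ⟨Λ, hΛ, rfl⟩
  obtain ⟨i, hi⟩ := hΛ.exists_le_of_directed hmono.directed_le (hunion ▸ Set.subset_univ _)
  refine Filter.le_liminf_of_le (by isBoundedDefault) ?_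
  filter_upwards [Filter.eventually_ge_atTop i] with j hj
  exact intrk_le_genrk_of_le hΛ (hi.trans (hmono hj))
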